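/- Let d ≥ 1, a > 0, and let f : ℝ^d → ℂ be differentiable with sup_{x ∈ ℝ^d} |∇f(x)| < ∞ and ∫_{ℝ^d} |f(x)|² e^{2a|x|} dx < ∞. Then there exists a constant C > 0 (depending on d, a, sup|f|, sup|∇f| and the weighted L² norm of f) such that |f(x)| ≤ C e^{−a|x|/(d+2)} for all x ∈ ℝ^d. -/

import Mathlib

/-!
A Lipschitz function `f` with `|f(x₀)| = t` stays above `t / 2` on the ball of radius
`r ≍ t / L` around `x₀`, where the weight is at least `e^{2a(|x₀| - r)}`. Comparing with the
weighted integral `I` gives `t² e^{2a(|x₀| - r)} r^d ≲ I`. With `r = 1` this first shows that `f`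
is bounded; then `r = t / (2L)` is bounded, and the estimate becomes `t^{d+2} e^{2a|x₀|} ≲ I`.
-/

open MeasureTheory Metric Module Real

section WeightedDecay

variable {E F : Type*} [NormedAddCommGroup E] [NormedSpace ℝ E] [MeasurableSpace E] [BorelSpace E]
  [FiniteDimensional ℝ E] (μ : Measure E) [μ.IsAddHaarMeasure] [NormedAddCommGroup F]
  {f : E → F} {L a : ℝ}

theorem addHaar_real_ball_of_pos (x : E) {r : ℝ} (hr : 0 < r) :
    μ.real (ball x r) = r ^ finrank ℝ E * μ.real (ball (0 : E) 1) := by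
  rw [measureReal_def, measureReal_def, Measure.addHaar_ball_of_pos μ x hr, ENNReal.toReal_mul,
    ENNReal.toReal_ofReal (by positivity)]

theorem sq_mul_exp_mul_measureReal_ball_le_integral (ha : 0 ≤ a) (hL : 0 ≤ L)
    (hlip : ∀ x y, ‖f y - f x‖ ≤ L * ‖y - x‖)
    (hint : Integrable (fun x => ‖f x‖ ^ 2 * exp (2 * a * ‖x‖)) μ) {x₀ : E} {r : ℝ}
    (hLr : L * r ≤ ‖f x₀‖ / 2) :
    (‖f x₀‖ / 2) ^ 2 * exp (2 * a * (‖x₀‖ - r)) * μ.real (ball x₀ r) ≤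
      ∫ x, ‖f x‖ ^ 2 * exp (2 * a * ‖x‖) ∂μ := by
  have hlower : ∀ x ∈ ball x₀ r,
      (‖f x₀‖ / 2) ^ 2 * exp (2 * a * (‖x₀‖ - r)) ≤ ‖f x‖ ^ 2 * exp (2 * a * ‖x‖) := by
    intro x hx
    rw [mem_ball, dist_eq_norm] at hx
    have hfx : ‖f x₀‖ / 2 ≤ ‖f x‖ := by
      have := hlip x x₀
      rw [norm_sub_rev x₀ x] at this
      nlinarith [norm_sub_norm_le (f x₀) (f x), mul_le_mul_of_nonneg_left hx.le hL]
    have hx' : ‖x₀‖ - r ≤ ‖x‖ := by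
      linarith [norm_sub_norm_le x₀ x, norm_sub_rev x₀ x]
    gcongr
  calc _ ≤ ∫ x in ball x₀ r, ‖f x‖ ^ 2 * exp (2 * a * ‖x‖) ∂μ :=
        setIntegral_ge_of_const_le_real measurableSet_ball measure_ball_lt_top.ne hlower
          hint.integrableOn
    _ ≤ _ := setIntegral_le_integral hint (Filter.Eventually.of_forall fun x => by positivity)

theorem exists_norm_le_of_integrable_sq_mul_exp (ha : 0 ≤ a) (hL : 0 ≤ L)
    (hlip : ∀ x y, ‖f y - f x‖ ≤ L * ‖y - x‖)
    (hint : Integrable (fun x => ‖f x‖ ^ 2 * exp (2 * a * ‖x‖)) μ) :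
    ∃ T, ∀ x, ‖f x‖ ≤ T := by
  set I := ∫ x, ‖f x‖ ^ 2 * exp (2 * a * ‖x‖) ∂μ
  set v := μ.real (ball (0 : E) 1)
  have hv : 0 < v :=
    ENNReal.toReal_pos (measure_ball_pos μ 0 one_pos).ne' measure_ball_lt_top.ne
  refine ⟨max (2 * L) √(4 * I * exp (2 * a) / v), fun x => ?_⟩
  rcases le_or_gt ‖f x‖ (2 * L) with h | h
  · exact h.trans (le_max_left _ _)
  refine le_max_of_le_right (le_sqrt_of_sq_le ?_)
  have key := sq_mul_exp_mul_measureReal_ball_le_integral μ ha hL hlip hint (x₀ := x) (r := 1)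
    (by linarith)
  rw [Measure.addHaar_real_ball_center] at key
  have hexp : exp (-(2 * a)) ≤ exp (2 * a * (‖x‖ - 1)) :=
    exp_le_exp.mpr (by nlinarith [norm_nonneg x])
  rw [le_div_iff₀ hv]
  calc ‖f x‖ ^ 2 * v = 4 * ((‖f x‖ / 2) ^ 2 * exp (-(2 * a)) * v) * exp (2 * a) := by
        rw [exp_neg]; field_simp; ring
    _ ≤ 4 * I * exp (2 * a) := by gcongr; exact le_trans (by gcongr) key

theorem exists_pow_mul_exp_le_of_integrable_sq_mul_exp (ha : 0 ≤ a) (hL : 0 < L)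
    (hlip : ∀ x y, ‖f y - f x‖ ≤ L * ‖y - x‖)
    (hint : Integrable (fun x => ‖f x‖ ^ 2 * exp (2 * a * ‖x‖)) μ) :
    ∃ K, 0 < K ∧ ∀ x, ‖f x‖ ^ (finrank ℝ E + 2) * exp (2 * a * ‖x‖) ≤ K := by
  obtain ⟨T, hT⟩ := exists_norm_le_of_integrable_sq_mul_exp μ ha hL.le hlip hint
  set n := finrank ℝ E
  set I := ∫ x, ‖f x‖ ^ 2 * exp (2 * a * ‖x‖) ∂μ
  have hI : 0 ≤ I := integral_nonneg fun x => by positivity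
  set v := μ.real (ball (0 : E) 1)
  have hv : 0 < v :=
    ENNReal.toReal_pos (measure_ball_pos μ 0 one_pos).ne' measure_ball_lt_top.ne
  set K := 4 * (2 * L) ^ n * I * exp (2 * a * (T / (2 * L))) / v
  refine ⟨max K 1, by positivity, fun x => le_max_of_le_left ?_⟩
  rcases (norm_nonneg (f x)).eq_or_lt with h0 | hpos
  · rw [← h0, zero_pow (by omega), zero_mul]
    positivity
  set r := ‖f x‖ / (2 * L)
  have hr : 0 < r := by positivity
  have key := sq_mul_exp_mul_measureReal_ball_le_integral μ ha hL.le hlip hint (x₀ := x) (r := r)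
    (le_of_eq (by simp only [r]; field_simp))
  rw [addHaar_real_ball_of_pos μ x hr] at key
  have hexp : exp (2 * a * ‖x‖) ≤ exp (2 * a * (‖x‖ - r)) * exp (2 * a * (T / (2 * L))) := by
    rw [← exp_add, exp_le_exp]
    have : r ≤ T / (2 * L) := div_le_div_of_nonneg_right (hT x) (by positivity)
    nlinarith
  rw [le_div_iff₀ hv]
  calc ‖f x‖ ^ (n + 2) * exp (2 * a * ‖x‖) * v
      ≤ ‖f x‖ ^ (n + 2) * (exp (2 * a * (‖x‖ - r)) * exp (2 * a * (T / (2 * L)))) * v := by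
        gcongr
    _ = 4 * (2 * L) ^ n * ((‖f x‖ / 2) ^ 2 * exp (2 * a * (‖x‖ - r)) * (r ^ n * v)) *
          exp (2 * a * (T / (2 * L))) := by
        simp only [r, div_pow]; field_simp; ring
    _ ≤ 4 * (2 * L) ^ n * I * exp (2 * a * (T / (2 * L))) := by gcongr

end WeightedDecay

theorem le_rpow_inv_mul_exp_of_pow_mul_exp_le {t K c : ℝ} {n : ℕ} (hn : n ≠ 0) (ht : 0 ≤ t)
    (hK : 0 ≤ K) (h : t ^ n * exp c ≤ K) : t ≤ K ^ (n : ℝ)⁻¹ * exp (-c / n) := by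
  refine (pow_le_pow_iff_left₀ ht (by positivity) hn).mp ?_
  rw [mul_pow, rpow_inv_natCast_pow hK hn, ← exp_nat_mul,
    mul_div_cancel₀ _ (Nat.cast_ne_zero.mpr hn), exp_neg, le_mul_inv_iff₀ (exp_pos c)]
  exact h

theorem stmt3 (d : ℕ) (a : ℝ) (ha : 0 < a)
    (f : EuclideanSpace ℝ (Fin d) → ℂ) (hf : Differentiable ℝ f)
    (M : ℝ) (hM : ∀ x, ‖fderiv ℝ f x‖ ≤ M)
    (hint : Integrable
      (fun x : EuclideanSpace ℝ (Fin d) => ‖f x‖ ^ 2 * Real.exp (2 * a * ‖x‖))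
      volume) :
    ∃ C : ℝ, 0 < C ∧ ∀ x : EuclideanSpace ℝ (Fin d),
      ‖f x‖ ≤ C * Real.exp (-(a * ‖x‖) / (d + 2)) := by
  have hlip : ∀ x y, ‖f y - f x‖ ≤ max M 1 * ‖y - x‖ := fun x y =>
    convex_univ.norm_image_sub_le_of_norm_fderiv_le (fun z _ => hf z)
      (fun z _ => (hM z).trans (le_max_left _ _)) trivial trivial
  obtain ⟨K, hK, hdecay⟩ := exists_pow_mul_exp_le_of_integrable_sq_mul_exp volume ha.le
    (one_pos.trans_le (le_max_right M 1)) hlip hint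
  rw [finrank_euclideanSpace_fin] at hdecay
  refine ⟨K ^ ((d + 2 : ℕ) : ℝ)⁻¹, by positivity, fun x => ?_⟩
  calc ‖f x‖ ≤ K ^ ((d + 2 : ℕ) : ℝ)⁻¹ * exp (-(2 * a * ‖x‖) / (d + 2 : ℕ)) :=
        le_rpow_inv_mul_exp_of_pow_mul_exp_le (by omega) (norm_nonneg _) hK.le (hdecay x)
    _ ≤ K ^ ((d + 2 : ℕ) : ℝ)⁻¹ * exp (-(a * ‖x‖) / (d + 2)) := by
        push_cast
        gcongr
        nlinarith [norm_nonneg x]
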